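/- arXiv:2411.04425 — 2 statements merged into one kernel-verified Lean document; each statement's English description precedes it below -/
import Mathlib

section
/- The greedy algorithm for maximizing a monotone nondecreasing submodular function f with f(∅) = 0 subject to a cardinality constraint |A| ≤ k produces a set A_k satisfying f(A_k) ≥ (1 − (1 − 1/k)^k) · f(OPT) ≥ (1 − 1/e) · f(OPT). -/
lemma greedy_aux_sum {D : Type*} [DecidableEq D]
    (f : Finset D → ℝ)
    (hmono : ∀ A B : Finset D, A ⊆ B → f A ≤ f B)
    (hsub : ∀ A B : Finset D, ∀ d : D, A ⊆ B → d ∉ B →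
      f (insert d B) - f B ≤ f (insert d A) - f A)
    (A B : Finset D) :
    f (A ∪ B) - f A ≤ ∑ d ∈ B, (f (insert d A) - f A) := by
  induction B using Finset.induction_on with
  | empty => simp
  | @insert d B' hd ih =>
    rw [Finset.sum_insert hd]
    by_cases h : d ∈ A ∪ B'
    · have heq : A ∪ insert d B' = A ∪ B' := by
        rw [Finset.union_insert, Finset.insert_eq_self.2 h]
      rw [heq]
      have h0 : 0 ≤ f (insert d A) - f A := by
        have := hmono A (insert d A) (Finset.subset_insert _ _); linarith
      linarith
    · have h1 : f (insert d (A ∪ B')) - f (A ∪ B') ≤ f (insert d A) - f A :=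
        hsub A (A ∪ B') d Finset.subset_union_left h
      rw [Finset.union_insert]
      linarith

/-- The (1 − (1 − 1/k)^k) ≥ (1 − 1/e) guarantee of greedy maximization of a monotone
    nondecreasing submodular function with `f ∅ = 0` under a cardinality constraint. -/
theorem greedy_submodular_guarantee {D : Type*} [DecidableEq D]
    (f : Finset D → ℝ)
    (hmono : ∀ A B : Finset D, A ⊆ B → f A ≤ f B)
    (hsub : ∀ A B : Finset D, ∀ d : D, A ⊆ B → d ∉ B →
      f (insert d B) - f B ≤ f (insert d A) - f A)
    (hempty : f ∅ = 0)
    (k : ℕ) (hk : 1 ≤ k)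
    (OPT : Finset D) (hOPTcard : OPT.card ≤ k)
    (hOPT : ∀ S : Finset D, S.card ≤ k → f S ≤ f OPT)
    (A : ℕ → Finset D) (hA0 : A 0 = ∅)
    (hgreedy : ∀ t, ∃ d : D, d ∉ A t ∧ A (t + 1) = insert d (A t) ∧
      ∀ e : D, f (insert e (A t)) - f (A t) ≤ f (insert d (A t)) - f (A t)) :
    (1 - (1 - 1 / (k : ℝ)) ^ k) * f OPT ≤ f (A k) ∧
    (1 - 1 / Real.exp 1) * f OPT ≤ (1 - (1 - 1 / (k : ℝ)) ^ k) * f OPT := by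
  have hkR : (1:ℝ) ≤ (k:ℝ) := by exact_mod_cast hk
  have hkpos : (0:ℝ) < (k:ℝ) := by linarith
  have hOPTnn : 0 ≤ f OPT := by
    have h := hOPT ∅ (by simp)
    rw [hempty] at h; exact h
  have hc0 : (0:ℝ) ≤ 1 - 1/(k:ℝ) := by
    have : 1/(k:ℝ) ≤ 1 := by rw [div_le_one hkpos]; exact hkR
    linarith
  have key : ∀ t, f OPT - f (A (t+1)) ≤ (1 - 1/(k:ℝ)) * (f OPT - f (A t)) := by
    intro t
    obtain ⟨d, hd, hAt1, hmax⟩ := hgreedy t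
    set g := f (A (t+1)) - f (A t) with hgdef
    have hg0 : 0 ≤ g := by
      have := hmono (A t) (A (t+1)) (hAt1 ▸ Finset.subset_insert _ _); linarith
    have h1 : f OPT ≤ f (A t ∪ OPT) := hmono _ _ Finset.subset_union_right
    have h2 : f (A t ∪ OPT) - f (A t) ≤ ∑ e ∈ OPT, (f (insert e (A t)) - f (A t)) :=
      greedy_aux_sum f hmono hsub (A t) OPT
    have h3 : ∑ e ∈ OPT, (f (insert e (A t)) - f (A t)) ≤ (OPT.card : ℝ) * g := by
      have := Finset.sum_le_card_nsmul OPT (fun e => f (insert e (A t)) - f (A t)) g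
        (fun e _ => by rw [hgdef, hAt1]; exact hmax e)
      simpa [nsmul_eq_mul] using this
    have h4 : (OPT.card : ℝ) * g ≤ (k:ℝ) * g := by
      apply mul_le_mul_of_nonneg_right _ hg0
      exact_mod_cast hOPTcard
    have h5 : f OPT - f (A t) ≤ (k:ℝ) * g := by linarith
    have h6 : (1/(k:ℝ)) * (f OPT - f (A t)) ≤ g := by
      have := mul_le_mul_of_nonneg_left h5 (le_of_lt (one_div_pos.2 hkpos))
      have hne : (k:ℝ) ≠ 0 := ne_of_gt hkpos
      calc (1/(k:ℝ)) * (f OPT - f (A t)) ≤ (1/(k:ℝ)) * ((k:ℝ) * g) := this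
        _ = g := by field_simp
    nlinarith
  have bound : ∀ t, f OPT - f (A t) ≤ (1 - 1/(k:ℝ))^t * f OPT := by
    intro t
    induction t with
    | zero => simp [hA0, hempty]
    | succ n ih =>
      calc f OPT - f (A (n+1)) ≤ (1 - 1/(k:ℝ)) * (f OPT - f (A n)) := key n
        _ ≤ (1 - 1/(k:ℝ)) * ((1 - 1/(k:ℝ))^n * f OPT) :=
            mul_le_mul_of_nonneg_left ih hc0
        _ = (1 - 1/(k:ℝ))^(n+1) * f OPT := by ring
  constructor
  · have := bound k
    nlinarith
  · have hexp : (1 - 1/(k:ℝ))^k ≤ 1 / Real.exp 1 := by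
      have h1 : 1 - 1/(k:ℝ) ≤ Real.exp (-(1/(k:ℝ))) := by
        have := Real.add_one_le_exp (-(1/(k:ℝ)))
        linarith
      have h2 : (1 - 1/(k:ℝ))^k ≤ (Real.exp (-(1/(k:ℝ))))^k :=
        pow_le_pow_left₀ hc0 h1 k
      have hne : (k:ℝ) ≠ 0 := ne_of_gt hkpos
      have h3 : (Real.exp (-(1/(k:ℝ))))^k = Real.exp (-1) := by
        rw [← Real.exp_nat_mul]
        congr 1
        field_simp
      rw [h3, Real.exp_neg] at h2
      rw [inv_eq_one_div] at h2
      exact h2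
    nlinarith
end

section
/- For a monotone submodular f with f(∅) = 0 and the greedy sets A_0 = ∅, A_{t+1} = A_t ∪ {argmax marginal gain}, one has for every t: f(A_{t+1}) − f(A_t) ≥ (f(OPT) − f(A_t))/k, where OPT is an optimal set of size at most k. -/
lemma union_gain_le_sum {D : Type*} [DecidableEq D]
    (f : Finset D → ℝ)
    (hmono : ∀ A B : Finset D, A ⊆ B → f A ≤ f B)
    (hsub : ∀ A B : Finset D, ∀ d : D, A ⊆ B → d ∉ B →
      f (insert d B) - f B ≤ f (insert d A) - f A)
    (A : Finset D) :
    ∀ S : Finset D, f (A ∪ S) - f A ≤ ∑ e ∈ S, (f (insert e A) - f A) := by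
  intro S
  induction S using Finset.induction_on with
  | empty => simp
  | @insert a S ha ih =>
    rw [Finset.sum_insert ha]
    have h1 : A ∪ insert a S = insert a (A ∪ S) := by
      ext x; simp [or_comm, or_left_comm, or_assoc]
    have hga : (0:ℝ) ≤ f (insert a A) - f A := by
      have := hmono A (insert a A) (Finset.subset_insert _ _); linarith
    by_cases h : a ∈ A ∪ S
    · rw [h1, Finset.insert_eq_self.mpr h]
      linarith
    · have h2 := hsub A (A ∪ S) a Finset.subset_union_left h
      rw [h1]; linarith

/-- Greedy step lemma: for monotone submodular `f` with `f ∅ = 0`, the marginal gain of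
    the greedy pick is at least `(f(OPT) - f(A))/k`. -/
theorem greedy_step_gain {D : Type*} [DecidableEq D]
    (f : Finset D → ℝ)
    (hmono : ∀ A B : Finset D, A ⊆ B → f A ≤ f B)
    (hsub : ∀ A B : Finset D, ∀ d : D, A ⊆ B → d ∉ B →
      f (insert d B) - f B ≤ f (insert d A) - f A)
    (hempty : f ∅ = 0)
    (k : ℕ) (hk : 1 ≤ k)
    (OPT : Finset D) (hOPTcard : OPT.card ≤ k)
    (hOPT : ∀ S : Finset D, S.card ≤ k → f S ≤ f OPT)
    (A : Finset D) (d : D)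
    (hd : ∀ e : D, f (insert e A) - f A ≤ f (insert d A) - f A) :
    (f OPT - f A) / (k : ℝ) ≤ f (insert d A) - f A := by
  set g := f (insert d A) - f A with hg
  have hg0 : (0:ℝ) ≤ g := by
    have := hmono A (insert d A) (Finset.subset_insert _ _); linarith
  have h1 : f OPT ≤ f (A ∪ OPT) := hmono _ _ Finset.subset_union_right
  have h2 := union_gain_le_sum f hmono hsub A OPT
  have h3 : ∑ e ∈ OPT, (f (insert e A) - f A) ≤ (OPT.card : ℝ) * g := by
    calc ∑ e ∈ OPT, (f (insert e A) - f A) ≤ ∑ _e ∈ OPT, g :=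
          Finset.sum_le_sum (fun e _ => hd e)
      _ = (OPT.card : ℝ) * g := by rw [Finset.sum_const, nsmul_eq_mul]
  have h4 : (OPT.card : ℝ) * g ≤ (k : ℝ) * g := by
    apply mul_le_mul_of_nonneg_right _ hg0
    exact_mod_cast hOPTcard
  have hkpos : (0:ℝ) < (k : ℝ) := by exact_mod_cast hk
  rw [div_le_iff₀ hkpos]
  nlinarith
end
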